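/- arXiv:2311.11924 — 3 statements merged into one kernel-verified Lean document; each statement's English description precedes it below -/
import Mathlib

section
/- Let Z be a standard Gaussian, h ∈ ℝ, β ∈ ℝ, and define φ(x) = E[tanh²(h + β√x Z)] for x ≥ 0. If h ≠ 0, then φ has a unique fixed point q > 0 on [0,∞), and φ(x) > x for x ∈ [0,q) while φ(x) < x for x > q. -/
/-! With `s = β √x`, `u = h + s Z` and `k = tanh / cosh² = (tanh²)' / 2`, differentiating
under the integral gives `x φ'(x) = E[k(u) (u - h)]`. Pointwise `u k(u) ≤ tanh² u`, and
`h E[k(u)] > 0` because `k` is odd and positive on `(0, ∞)` while `u` is Gaussian with mean `h`;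
hence `x φ'(x) < φ(x)`, i.e. `φ(x) / x` is strictly decreasing on `(0, ∞)`. Since
`φ(0) = tanh² h > 0` and `φ ≤ 1`, the intermediate value theorem yields a fixed point, and the
monotonicity of `φ(x) / x` gives its uniqueness and the sign of `φ(x) - x` on either side. -/

open MeasureTheory ProbabilityTheory

/-- `φ(x) = E[tanh²(h + β √x Z)]`, `Z` a standard Gaussian. -/
noncomputable def phi (h β x : ℝ) : ℝ :=
  ∫ z, Real.tanh (h + β * Real.sqrt x * z) ^ 2 ∂(gaussianReal 0 1)

open Real
open scoped NNReal ENNReal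

namespace Real

theorem hasDerivAt_tanh (x : ℝ) : HasDerivAt tanh (1 / cosh x ^ 2) x := by
  have h := (hasDerivAt_sinh x).div (hasDerivAt_cosh x) (cosh_pos x).ne'
  rw [show sinh / cosh = tanh from funext fun y => (tanh_eq_sinh_div_cosh y).symm] at h
  refine h.congr_deriv ?_
  rw [← cosh_sq_sub_sinh_sq x]
  ring

theorem continuous_tanh : Continuous tanh :=
  continuous_iff_continuousAt.2 fun x => (hasDerivAt_tanh x).continuousAt

theorem hasDerivAt_tanh_sq (x : ℝ) :
    HasDerivAt (fun x => tanh x ^ 2) (2 * (tanh x / cosh x ^ 2)) x := by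
  refine ((hasDerivAt_tanh x).pow 2).congr_deriv ?_
  ring

theorem tanh_pos {x : ℝ} (hx : 0 < x) : 0 < tanh x := by
  rw [tanh_eq_sinh_div_cosh]
  exact div_pos (sinh_pos_iff.2 hx) (cosh_pos x)

theorem tanh_ne_zero {x : ℝ} (hx : x ≠ 0) : tanh x ≠ 0 := by
  rw [tanh_eq_sinh_div_cosh]
  exact div_ne_zero (sinh_ne_zero.2 hx) (cosh_pos x).ne'

theorem abs_tanh_div_cosh_sq_le_one (x : ℝ) : |tanh x / cosh x ^ 2| ≤ 1 := by
  have hc : 1 ≤ cosh x ^ 2 := one_le_pow₀ (one_le_cosh x)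
  rw [abs_div, abs_of_pos (by positivity : 0 < cosh x ^ 2), div_le_one (by positivity)]
  linarith [abs_tanh_lt_one x]

/-- Equivalent to `2x ≤ sinh 2x` for `x ≥ 0`. -/
theorem mul_tanh_div_cosh_sq_le_tanh_sq (x : ℝ) : x * (tanh x / cosh x ^ 2) ≤ tanh x ^ 2 := by
  have hc := cosh_pos x
  have key : x * sinh x ≤ sinh x ^ 2 * cosh x := by
    have h1 := one_le_cosh x
    rcases lt_trichotomy x 0 with hx | rfl | hx
    · have : sinh x < x := by simpa using self_lt_sinh_iff.2 (neg_pos.2 hx)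
      nlinarith [sinh_neg_iff.2 hx]
    · simp
    · nlinarith [self_lt_sinh_iff.2 hx]
  rw [tanh_eq_sinh_div_cosh, div_pow, div_div, ← mul_div_assoc,
    div_le_div_iff₀ (by positivity) (by positivity)]
  nlinarith [pow_pos hc 2]

end Real

section GaussianOdd

variable {μ : ℝ} {v : ℝ≥0}

theorem mul_gaussianPDFReal_sub_neg_pos (hv : v ≠ 0) {x : ℝ} (hx : μ * x ≠ 0) :
    0 < μ * x * (gaussianPDFReal μ v x - gaussianPDFReal μ v (-x)) := by
  have hv' : (0 : ℝ) < v := by positivity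
  have hexp : -(-x - μ) ^ 2 / (2 * v) = -(x - μ) ^ 2 / (2 * v) - μ * x * (2 / v) := by
    field_simp
    ring
  rw [gaussianPDFReal, gaussianPDFReal, hexp, ← mul_sub]
  have hc : 0 < (√(2 * π * v))⁻¹ := by positivity
  rcases hx.lt_or_gt with hneg | hpos
  · have : rexp (-(x - μ) ^ 2 / (2 * v)) < rexp (-(x - μ) ^ 2 / (2 * v) - μ * x * (2 / v)) :=
      exp_lt_exp.2 (by nlinarith [div_pos two_pos hv'])
    nlinarith [mul_pos hc (sub_pos.2 this)]
  · have : rexp (-(x - μ) ^ 2 / (2 * v) - μ * x * (2 / v)) < rexp (-(x - μ) ^ 2 / (2 * v)) :=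
      exp_lt_exp.2 (by nlinarith [div_pos two_pos hv'])
    nlinarith [mul_pos hc (sub_pos.2 this)]

theorem integrable_gaussianPDFReal_mul_of_integrable (hv : v ≠ 0) {g : ℝ → ℝ}
    (hg : Integrable g (gaussianReal μ v)) :
    Integrable (fun x => gaussianPDFReal μ v x * g x) := by
  rw [gaussianReal_of_var_ne_zero _ hv, integrable_withDensity_iff_integrable_smul'
    (measurable_gaussianPDF μ v) (ae_of_all _ fun _ => ENNReal.ofReal_lt_top)] at hg
  simpa [gaussianPDF, ENNReal.toReal_ofReal (gaussianPDFReal_nonneg μ v _)] using hg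

theorem mul_integral_gaussianReal_pos_of_odd {g : ℝ → ℝ} (hμ : μ ≠ 0)
    (hg_neg : ∀ x, g (-x) = -g x) (hg_pos : ∀ x, 0 < x → 0 < g x)
    (hg : Integrable g (gaussianReal μ v)) :
    0 < μ * ∫ x, g x ∂gaussianReal μ v := by
  have mul_self_pos : ∀ x, x ≠ 0 → 0 < x * g x := by
    intro x hx
    rcases hx.lt_or_gt with hneg | hpos
    · have := hg_pos _ (neg_pos.2 hneg)
      rw [hg_neg] at this
      nlinarith
    · exact mul_pos hpos (hg_pos x hpos)
  rcases eq_or_ne v 0 with rfl | hv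
  · simpa [gaussianReal_zero_var] using mul_self_pos μ hμ
  set p := gaussianPDFReal μ v
  have hpg : Integrable (fun x => p x * g x) := integrable_gaussianPDFReal_mul_of_integrable hv hg
  have hpg_neg : Integrable (fun x => p (-x) * g x) := by
    simpa [hg_neg] using hpg.comp_neg.neg
  have hrefl : ∫ x, p x * g x = -∫ x, p (-x) * g x := by
    rw [← integral_neg_eq_self, ← integral_neg]
    simp [hg_neg]
  -- after reflecting `x ↦ -x`, the integrand is `(μ x (p x - p (-x))) (x g x) / x²`
  have hsym_pos : ∀ x, x ≠ 0 → 0 < μ * ((p x - p (-x)) * g x) := by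
    intro x hx
    have h : 0 < μ * x * (p x - p (-x)) * (x * g x) :=
      mul_pos (mul_gaussianPDFReal_sub_neg_pos hv (mul_ne_zero hμ hx)) (mul_self_pos x hx)
    have : 0 < μ * ((p x - p (-x)) * g x) * x ^ 2 := by linarith
    exact pos_of_mul_pos_left this (sq_nonneg x)
  have hsym_nonneg : 0 ≤ fun x => μ * ((p x - p (-x)) * g x) := by
    intro x
    rcases eq_or_ne x 0 with rfl | hx
    · have h0 := hg_neg 0
      rw [neg_zero, self_eq_neg] at h0
      simp [h0]
    · exact (hsym_pos x hx).le
  have hsym_int : Integrable fun x => μ * ((p x - p (-x)) * g x) := by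
    refine ((hpg.sub hpg_neg).const_mul μ).congr (ae_of_all _ fun x => ?_)
    simp only [Pi.sub_apply]
    ring
  have hI : 0 < ∫ x, μ * ((p x - p (-x)) * g x) := by
    rw [integral_pos_iff_support_of_nonneg hsym_nonneg hsym_int]
    calc (0 : ℝ≥0∞) < volume (Set.Ioi (0 : ℝ)) := by simp
      _ ≤ _ := measure_mono fun x hx => (hsym_pos x (ne_of_gt hx)).ne'
  have hsplit : ∫ x, (p x - p (-x)) * g x = 2 * ∫ x, p x * g x := by
    simp_rw [sub_mul]
    rw [integral_sub hpg hpg_neg]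
    linarith
  rw [integral_const_mul, hsplit] at hI
  rw [integral_gaussianReal_eq_integral_smul hv]
  simp only [smul_eq_mul]
  linarith

end GaussianOdd

theorem gaussianReal_map_const_add_mul {μ : ℝ} {v : ℝ≥0} (y c : ℝ) :
    (gaussianReal μ v).map (fun z => y + c * z) =
      gaussianReal (c * μ + y) (.mk (c ^ 2) (sq_nonneg c) * v) := by
  rw [show (fun z => y + c * z) = (y + ·) ∘ (c * ·) from rfl,
    ← Measure.map_map (by fun_prop) (by fun_prop), gaussianReal_map_const_mul,
    gaussianReal_map_const_add]

theorem continuous_tanh_div_cosh_sq : Continuous fun x => tanh x / cosh x ^ 2 :=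
  continuous_tanh.div (continuous_cosh.pow 2) fun x => by positivity

theorem hasDerivAt_integral_tanh_sq {ν : Measure ℝ} [IsFiniteMeasure ν]
    (hν : Integrable (fun z => z) ν) (h s : ℝ) :
    HasDerivAt (fun s => ∫ z, tanh (h + s * z) ^ 2 ∂ν)
      (2 * ∫ z, tanh (h + s * z) / cosh (h + s * z) ^ 2 * z ∂ν) s := by
  have hk : ∀ s, Continuous fun z => tanh (h + s * z) / cosh (h + s * z) ^ 2 * z := fun s =>
    (continuous_tanh_div_cosh_sq.comp (by fun_prop)).mul continuous_id
  have hF := hasDerivAt_integral_of_dominated_loc_of_deriv_le (μ := ν) (x₀ := s)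
    (F := fun s z => tanh (h + s * z) ^ 2)
    (F' := fun s z => 2 * (tanh (h + s * z) / cosh (h + s * z) ^ 2 * z))
    (bound := fun z => 2 * |z|) Filter.univ_mem
    (.of_forall fun s => ((continuous_tanh.comp (by fun_prop)).pow 2).aestronglyMeasurable)
    (.of_bound ((continuous_tanh.comp (by fun_prop)).pow 2).aestronglyMeasurable 1
      (.of_forall fun z => by simpa using (tanh_sq_lt_one _).le))
    ((continuous_const.mul (hk s)).aestronglyMeasurable)
    (.of_forall fun z s _ => by
      rw [norm_mul, norm_mul, Real.norm_two, Real.norm_eq_abs, Real.norm_eq_abs]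
      gcongr
      exact mul_le_of_le_one_left (abs_nonneg z) (abs_tanh_div_cosh_sq_le_one _))
    (hν.abs.const_mul 2)
    (.of_forall fun z s _ => by
      refine ((hasDerivAt_tanh_sq _).comp s (((hasDerivAt_id s).mul_const z).const_add h))
        |>.congr_deriv ?_
      simp only [id_eq, one_mul]
      ring)
  simpa only [integral_const_mul] using hF.2

theorem mul_integral_tanh_div_cosh_sq_mul_lt_integral_tanh_sq {h : ℝ} (hh : h ≠ 0) (s : ℝ) :
    s * ∫ z, tanh (h + s * z) / cosh (h + s * z) ^ 2 * z ∂gaussianReal 0 1 <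
      ∫ z, tanh (h + s * z) ^ 2 ∂gaussianReal 0 1 := by
  set k : ℝ → ℝ := fun u => tanh u / cosh u ^ 2 with hk_def
  have hk_comp_int : Integrable (fun z => k (h + s * z)) (gaussianReal 0 1) :=
    .of_bound (continuous_tanh_div_cosh_sq.comp (by fun_prop)).aestronglyMeasurable 1
      (.of_forall fun z => abs_tanh_div_cosh_sq_le_one _)
  have hkz_int : Integrable (fun z => k (h + s * z) * (s * z)) (gaussianReal 0 1) := by
    refine (IsGaussian.integrable_id.const_mul s).norm.mono'
      ((continuous_tanh_div_cosh_sq.comp (by fun_prop)).mul (by fun_prop)).aestronglyMeasurable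
      (.of_forall fun z => ?_)
    rw [norm_mul]
    exact mul_le_of_le_one_left (norm_nonneg _) (abs_tanh_div_cosh_sq_le_one _)
  have htanh_int : Integrable (fun z => tanh (h + s * z) ^ 2) (gaussianReal 0 1) :=
    .of_bound ((continuous_tanh.comp (by fun_prop)).pow 2).aestronglyMeasurable 1
      (.of_forall fun z => by simpa using (tanh_sq_lt_one _).le)
  have hmean : 0 < h * ∫ z, k (h + s * z) ∂gaussianReal 0 1 := by
    rw [← integral_map (by fun_prop) continuous_tanh_div_cosh_sq.aestronglyMeasurable,
      gaussianReal_map_const_add_mul, mul_zero, zero_add]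
    refine mul_integral_gaussianReal_pos_of_odd hh (fun u => ?_) (fun u hu => ?_)
      (.of_bound continuous_tanh_div_cosh_sq.aestronglyMeasurable 1
        (.of_forall fun u => abs_tanh_div_cosh_sq_le_one u))
    · simp only [tanh_neg, cosh_neg, neg_div]
    · exact div_pos (tanh_pos hu) (by positivity)
  -- `s z = u - h` with `u = h + s z`, and `u k(u) ≤ tanh² u` pointwise
  calc s * ∫ z, k (h + s * z) * z ∂gaussianReal 0 1
      = ∫ z, k (h + s * z) * (s * z) ∂gaussianReal 0 1 := by
        rw [← integral_const_mul]
        congr 1 with z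
        ring
    _ ≤ ∫ z, (tanh (h + s * z) ^ 2 - h * k (h + s * z)) ∂gaussianReal 0 1 := by
        refine integral_mono hkz_int (htanh_int.sub (hk_comp_int.const_mul h)) fun z => ?_
        have := mul_tanh_div_cosh_sq_le_tanh_sq (h + s * z)
        simp only [hk_def] at this ⊢
        linarith
    _ = ∫ z, tanh (h + s * z) ^ 2 ∂gaussianReal 0 1 -
          h * ∫ z, k (h + s * z) ∂gaussianReal 0 1 := by
        rw [integral_sub htanh_int (hk_comp_int.const_mul h), integral_const_mul]
    _ < ∫ z, tanh (h + s * z) ^ 2 ∂gaussianReal 0 1 := by linarith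

theorem hasDerivAt_phi (h β : ℝ) {x : ℝ} (hx : 0 < x) :
    HasDerivAt (phi h β) ((2 * ∫ z, tanh (h + β * √x * z) / cosh (h + β * √x * z) ^ 2 * z
      ∂gaussianReal 0 1) * (β * (1 / (2 * √x)))) x := by
  have hF := hasDerivAt_integral_tanh_sq (ν := gaussianReal 0 1) IsGaussian.integrable_id h
    (β * √x)
  exact hF.comp x ((hasDerivAt_sqrt hx.ne').const_mul β)

theorem continuous_phi (h β : ℝ) : Continuous (phi h β) :=
  (continuous_iff_continuousAt.2 fun s =>
    (hasDerivAt_integral_tanh_sq IsGaussian.integrable_id h s).continuousAt).comp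
    (continuous_const.mul continuous_sqrt)

theorem phi_zero (h β : ℝ) : phi h β 0 = tanh h ^ 2 := by
  simp [phi]

theorem phi_le_one (h β x : ℝ) : phi h β x ≤ 1 := by
  have := norm_integral_le_of_norm_le_const (μ := gaussianReal 0 1) (C := 1)
    (f := fun z => tanh (h + β * √x * z) ^ 2) (.of_forall fun z => by
      rw [Real.norm_of_nonneg (sq_nonneg _)]
      exact (tanh_sq_lt_one _).le)
  rw [probReal_univ, mul_one, Real.norm_eq_abs] at this
  exact (le_abs_self _).trans this

theorem strictAntiOn_phi_div {h : ℝ} (hh : h ≠ 0) (β : ℝ) :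
    StrictAntiOn (fun x => phi h β x / x) (Set.Ioi 0) := by
  refine strictAntiOn_of_deriv_neg (convex_Ioi 0)
    ((continuous_phi h β).continuousOn.div continuousOn_id fun x hx => ne_of_gt hx) fun x hx => ?_
  rw [interior_Ioi] at hx
  have hx : 0 < x := hx
  rw [show (fun x => phi h β x / x) = phi h β / id from rfl,
    ((hasDerivAt_phi h β hx).div (hasDerivAt_id x) hx.ne').deriv]
  refine div_neg_of_neg_of_pos ?_ (by positivity)
  have key := mul_integral_tanh_div_cosh_sq_mul_lt_integral_tanh_sq hh (β * √x)
  set I := ∫ z, tanh (h + β * √x * z) / cosh (h + β * √x * z) ^ 2 * z ∂gaussianReal 0 1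
  have hderiv : 2 * I * (β * (1 / (2 * √x))) * x = β * √x * I := by
    field_simp
    rw [sq_sqrt hx.le]
  rw [id, hderiv, mul_one]
  exact sub_neg.2 key

theorem exists_unique_fixedPoint_of_strictAntiOn_div {f : ℝ → ℝ} {b : ℝ} (hb : 0 ≤ b)
    (hf : ContinuousOn f (Set.Icc 0 b)) (hf₀ : 0 < f 0) (hfb : f b ≤ b)
    (hanti : StrictAntiOn (fun x => f x / x) (Set.Ioi 0)) :
    ∃ q : ℝ, 0 < q ∧ f q = q ∧
      (∀ x, 0 ≤ x → f x = x → x = q) ∧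
      (∀ x, 0 ≤ x → x < q → x < f x) ∧
      (∀ x, q < x → f x < x) := by
  obtain ⟨q, hq, hfq⟩ : ∃ q ∈ Set.Icc 0 b, f q - q = 0 :=
    intermediate_value_Icc' hb (hf.sub continuousOn_id) ⟨by simp [hfb], by simp [hf₀.le]⟩
  have hfix : f q = q := sub_eq_zero.1 hfq
  have hq₀ : 0 < q := hq.1.lt_of_ne fun h => by rw [← h] at hfix; linarith
  have hratio_q : f q / q = 1 := by rw [hfix, div_self hq₀.ne']
  have below : ∀ x, 0 < x → (x < f x ↔ x < q) := fun x hx => by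
    rw [← one_lt_div hx, ← hratio_q]
    exact hanti.lt_iff_gt hq₀ hx
  have above : ∀ x, 0 < x → (f x < x ↔ q < x) := fun x hx => by
    rw [← div_lt_one hx, ← hratio_q]
    exact hanti.lt_iff_gt hx hq₀
  refine ⟨q, hq₀, hfix, fun x hx hfx => ?_, fun x hx hxq => ?_, fun x hqx => ?_⟩
  · have hx₀ : 0 < x := hx.lt_of_ne fun h => by rw [← h] at hfx; linarith
    rcases lt_trichotomy x q with hxq | rfl | hqx
    · linarith [(below x hx₀).2 hxq]
    · rfl
    · linarith [(above x hx₀).2 hqx]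
  · rcases hx.eq_or_lt with rfl | hx₀
    · exact hf₀
    · exact (below x hx₀).2 hxq
  · exact (above x (hq₀.trans hqx)).2 hqx

/-- For `h ≠ 0`, `φ` has a unique fixed point `q > 0` on `[0,∞)`, with `φ(x) > x` on `[0,q)`
and `φ(x) < x` on `(q,∞)`. -/
theorem stmt3 (h β : ℝ) (hh : h ≠ 0) :
    ∃ q : ℝ, 0 < q ∧ phi h β q = q ∧
      (∀ x, 0 ≤ x → phi h β x = x → x = q) ∧
      (∀ x, 0 ≤ x → x < q → x < phi h β x) ∧
      (∀ x, q < x → phi h β x < x) := by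
  refine exists_unique_fixedPoint_of_strictAntiOn_div zero_le_one (continuous_phi h β).continuousOn
    ?_ (phi_le_one h β 1) (strictAntiOn_phi_div hh β)
  rw [phi_zero]
  have := tanh_ne_zero hh
  positivity
end

section
/- Let (X,Y) be a centered bivariate Gaussian vector and f, g : ℝ → ℝ be C² functions, bounded with two bounded derivatives. Then the derivative of E[f(X)g(Y)] with respect to Cov(X,Y) (at fixed variances) equals E[f'(X)g'(Y)]. -/
open MeasureTheory ProbabilityTheory
open scoped NNReal

/-!
With `X = a z₁` and `Y = b z₁ + c z₂` as in `Egauss2` (`a = √t₂`, `b = t / √t₂`,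
`c = √(t₃ - t² / t₂)`), differentiating in `t` under the integral gives
`E[f(X) g'(Y) (b' z₁ + c' z₂)]`, and Gaussian integration by parts `E[z h(z)] = E[h'(z)]` in each
coordinate turns this into `a b' E[f'(X) g'(Y)] + (b b' + c c') E[f(X) g''(Y)]`. Since
`Cov(X, Y) = a b = t` we have `a b' = 1`, and since `Var Y = b² + c² = t₃` does not depend on `t`
we have `b b' + c c' = 0`.
-/

/-- Expectation of `F (X, Y)` where `(X, Y)` is a centered bivariate Gaussian with
`Var X = t₂`, `Var Y = t₃`, `Cov(X,Y) = t₁`, realized via two independent standard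
Gaussians `z₁, z₂` as `X = √t₂ z₁`, `Y = (t₁/√t₂) z₁ + √(t₃ − t₁²/t₂) z₂`. -/
noncomputable def Egauss2 (F : ℝ → ℝ → ℝ) (t₁ t₂ t₃ : ℝ) : ℝ :=
  ∫ z₁, ∫ z₂,
    F (Real.sqrt t₂ * z₁)
      (t₁ / Real.sqrt t₂ * z₁ + Real.sqrt (t₃ - t₁ ^ 2 / t₂) * z₂)
    ∂(gaussianReal 0 1) ∂(gaussianReal 0 1)

open Filter Topology

lemma measurable_of_forall_hasDerivAt {h h' : ℝ → ℝ} (hd : ∀ x, HasDerivAt h (h' x) x) :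
    Measurable h' := by
  rw [show h' = deriv h from funext fun x => (hd x).deriv.symm]
  exact measurable_deriv h

lemma integrable_gaussianReal_iff {μ : ℝ} {v : ℝ≥0} (hv : v ≠ 0) {k : ℝ → ℝ} :
    Integrable k (gaussianReal μ v) ↔ Integrable (fun x => gaussianPDFReal μ v x * k x) := by
  rw [gaussianReal_of_var_ne_zero _ hv, integrable_withDensity_iff_integrable_smul'
    (measurable_gaussianPDF μ v) (ae_of_all _ fun _ => gaussianPDF_lt_top)]
  simp only [toReal_gaussianPDF, smul_eq_mul]

lemma hasDerivAt_gaussianPDFReal (μ : ℝ) (v : ℝ≥0) (x : ℝ) :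
    HasDerivAt (gaussianPDFReal μ v) (-((x - μ) / v) * gaussianPDFReal μ v x) x := by
  have hexp : HasDerivAt (fun y => -(y - μ) ^ 2 / (2 * v)) (-((x - μ) / v)) x := by
    have := ((((hasDerivAt_id' x).sub_const μ).pow 2).fun_neg).div_const (2 * (v : ℝ))
    exact this.congr_deriv (by push_cast; ring)
  rw [gaussianPDFReal_def]
  exact (hexp.exp.const_mul _).congr_deriv (by ring)

lemma integral_sub_mul_gaussianReal {μ : ℝ} {v : ℝ≥0} {h h' : ℝ → ℝ} {C C' : ℝ}
    (hd : ∀ x, HasDerivAt h (h' x) x) (hb : ∀ x, ‖h x‖ ≤ C) (hb' : ∀ x, ‖h' x‖ ≤ C') :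
    ∫ x, (x - μ) * h x ∂gaussianReal μ v = v * ∫ x, h' x ∂gaussianReal μ v := by
  rcases eq_or_ne v 0 with rfl | hv
  · simp [gaussianReal_zero_var]
  have hh : Continuous h := continuous_iff_continuousAt.2 fun x => (hd x).continuousAt
  have int_h : Integrable h (gaussianReal μ v) :=
    (integrable_const C).mono' hh.aestronglyMeasurable (ae_of_all _ hb)
  have int_h' : Integrable h' (gaussianReal μ v) :=
    (integrable_const C').mono' (measurable_of_forall_hasDerivAt hd).aestronglyMeasurable
      (ae_of_all _ hb')
  have int_xh : Integrable (fun x => (x - μ) * h x) (gaussianReal μ v) :=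
    ((memLp_id_gaussianReal 1).integrable le_rfl |>.sub (integrable_const μ)).mul_bdd
      hh.aestronglyMeasurable (ae_of_all _ hb)
  rw [integrable_gaussianReal_iff hv] at int_h int_h' int_xh
  -- the density `p` satisfies `v p' = -(x - μ) p`, so `∫ (p h)' = 0` is the claim
  have boundary := integral_eq_zero_of_hasDerivAt_of_integrable
    (fun x => (hasDerivAt_gaussianPDFReal μ v x).mul (hd x))
    (((int_xh.const_mul (-(v : ℝ)⁻¹)).add int_h').congr (ae_of_all _ fun x => by
      simp only [Pi.add_apply]; ring)) int_h
  have hsplit : ∫ x, -((x - μ) / v) * gaussianPDFReal μ v x * h x + gaussianPDFReal μ v x * h' x =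
      -(v : ℝ)⁻¹ * (∫ x, gaussianPDFReal μ v x * ((x - μ) * h x)) +
        ∫ x, gaussianPDFReal μ v x * h' x := by
    rw [← integral_const_mul, ← integral_add (int_xh.const_mul _) int_h']
    congr 1 with x
    ring
  have hinv : (v : ℝ)⁻¹ * ∫ x, gaussianPDFReal μ v x * ((x - μ) * h x) =
      ∫ x, gaussianPDFReal μ v x * h' x := by
    linarith [hsplit.symm.trans boundary]
  simp only [integral_gaussianReal_eq_integral_smul hv, smul_eq_mul]
  rw [← hinv, mul_inv_cancel_left₀ (by exact_mod_cast hv)]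

local notation "γ₂" => Measure.prod (gaussianReal 0 1) (gaussianReal 0 1)

lemma integral_snd_mul_gaussianReal_prod {φ φ' : ℝ × ℝ → ℝ} {C C' : ℝ}
    (hφ : ∀ z : ℝ × ℝ, HasDerivAt (fun y => φ (z.1, y)) (φ' z) z.2)
    (hφm : AEStronglyMeasurable φ γ₂) (hφ'm : AEStronglyMeasurable φ' γ₂)
    (hb : ∀ z, ‖φ z‖ ≤ C) (hb' : ∀ z, ‖φ' z‖ ≤ C') :
    ∫ z, z.2 * φ z ∂γ₂ = ∫ z, φ' z ∂γ₂ := by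
  have int_snd : Integrable (fun z : ℝ × ℝ => z.2) γ₂ :=
    ((memLp_id_gaussianReal 1).integrable le_rfl).comp_snd _
  rw [integral_prod _ (int_snd.mul_bdd hφm (ae_of_all _ hb)),
    integral_prod _ ((integrable_const C').mono' hφ'm (ae_of_all _ hb'))]
  congr 1 with x
  simpa using integral_sub_mul_gaussianReal (μ := 0) (v := 1) (fun y => hφ (x, y))
    (fun y => hb (x, y)) (fun y => hb' (x, y))

lemma integral_fst_mul_gaussianReal_prod {φ φ' : ℝ × ℝ → ℝ} {C C' : ℝ}
    (hφ : ∀ z : ℝ × ℝ, HasDerivAt (fun x => φ (x, z.2)) (φ' z) z.1)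
    (hφm : AEStronglyMeasurable φ γ₂) (hφ'm : AEStronglyMeasurable φ' γ₂)
    (hb : ∀ z, ‖φ z‖ ≤ C) (hb' : ∀ z, ‖φ' z‖ ≤ C') :
    ∫ z, z.1 * φ z ∂γ₂ = ∫ z, φ' z ∂γ₂ := by
  have swap_preserving := Measure.measurePreserving_swap (μ := gaussianReal 0 1)
    (ν := gaussianReal 0 1)
  rw [← integral_prod_swap, ← integral_prod_swap φ']
  exact integral_snd_mul_gaussianReal_prod (fun z => hφ z.swap)
    (hφm.comp_measurePreserving swap_preserving) (hφ'm.comp_measurePreserving swap_preserving)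
    (fun z => hb z.swap) (fun z => hb' z.swap)

lemma integral_comp_mul_linear_gaussianReal_prod {f f' g g' : ℝ → ℝ} {Cf Cf' Cg Cg' : ℝ}
    (hf : ∀ x, HasDerivAt f (f' x) x) (hg : ∀ y, HasDerivAt g (g' y) y)
    (hfb : ∀ x, ‖f x‖ ≤ Cf) (hf'b : ∀ x, ‖f' x‖ ≤ Cf')
    (hgb : ∀ y, ‖g y‖ ≤ Cg) (hg'b : ∀ y, ‖g' y‖ ≤ Cg') (a b c β κ : ℝ) :
    ∫ z, f (a * z.1) * g (b * z.1 + c * z.2) * (β * z.1 + κ * z.2) ∂γ₂ =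
      β * a * (∫ z, f' (a * z.1) * g (b * z.1 + c * z.2) ∂γ₂) +
        (β * b + κ * c) * ∫ z, f (a * z.1) * g' (b * z.1 + c * z.2) ∂γ₂ := by
  have hfc : Continuous f := continuous_iff_continuousAt.2 fun x => (hf x).continuousAt
  have hgc : Continuous g := continuous_iff_continuousAt.2 fun y => (hg y).continuousAt
  have hf'm := measurable_of_forall_hasDerivAt hf
  have hg'm := measurable_of_forall_hasDerivAt hg
  set φ : ℝ × ℝ → ℝ := fun z => f (a * z.1) * g (b * z.1 + c * z.2)
  have hφm : AEStronglyMeasurable φ γ₂ := by fun_prop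
  have hφb : ∀ z, ‖φ z‖ ≤ Cf * Cg := fun z => norm_mul_le_of_le (hfb _) (hgb _)
  have hJ' : AEStronglyMeasurable (fun z : ℝ × ℝ => f' (a * z.1) * g (b * z.1 + c * z.2)) γ₂ :=
    Measurable.aestronglyMeasurable (by fun_prop)
  have hJ2 : AEStronglyMeasurable (fun z : ℝ × ℝ => f (a * z.1) * g' (b * z.1 + c * z.2)) γ₂ :=
    Measurable.aestronglyMeasurable (by fun_prop)
  have hJ'b : ∀ z : ℝ × ℝ, ‖f' (a * z.1) * g (b * z.1 + c * z.2)‖ ≤ Cf' * Cg :=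
    fun z => norm_mul_le_of_le (hf'b _) (hgb _)
  have hJ2b : ∀ z : ℝ × ℝ, ‖f (a * z.1) * g' (b * z.1 + c * z.2)‖ ≤ Cf * Cg' :=
    fun z => norm_mul_le_of_le (hfb _) (hg'b _)
  have int_J' := (integrable_const (Cf' * Cg)).mono' hJ' (ae_of_all _ hJ'b)
  have int_J2 := (integrable_const (Cf * Cg')).mono' hJ2 (ae_of_all _ hJ2b)
  have stein_fst : ∫ z, z.1 * φ z ∂γ₂ = ∫ z, a * (f' (a * z.1) * g (b * z.1 + c * z.2)) +
      b * (f (a * z.1) * g' (b * z.1 + c * z.2)) ∂γ₂ := by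
    refine integral_fst_mul_gaussianReal_prod (fun z => ?_) hφm
      ((hJ'.const_mul a).add (hJ2.const_mul b)) hφb
      (fun z => norm_add_le_of_le (norm_mul_le_of_le le_rfl (hJ'b z))
        (norm_mul_le_of_le le_rfl (hJ2b z)))
    have := ((hf _).comp z.1 ((hasDerivAt_id' z.1).const_mul a)).mul
      ((hg _).comp z.1 (((hasDerivAt_id' z.1).const_mul b).add_const (c * z.2)))
    exact this.congr_deriv (by simp only [Function.comp_apply]; ring)
  have stein_snd : ∫ z, z.2 * φ z ∂γ₂ = ∫ z, c * (f (a * z.1) * g' (b * z.1 + c * z.2)) ∂γ₂ := by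
    refine integral_snd_mul_gaussianReal_prod (fun z => ?_) hφm (hJ2.const_mul c) hφb
      (fun z => norm_mul_le_of_le le_rfl (hJ2b z))
    have := ((hg _).comp z.2 (((hasDerivAt_id' z.2).const_mul c).const_add (b * z.1))).const_mul
      (f (a * z.1))
    exact this.congr_deriv (by ring)
  have int_fst : Integrable (fun z : ℝ × ℝ => z.1) γ₂ :=
    ((memLp_id_gaussianReal 1).integrable le_rfl).comp_fst _
  have int_snd : Integrable (fun z : ℝ × ℝ => z.2) γ₂ :=
    ((memLp_id_gaussianReal 1).integrable le_rfl).comp_snd _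
  calc ∫ z, φ z * (β * z.1 + κ * z.2) ∂γ₂
      = β * (∫ z, z.1 * φ z ∂γ₂) + κ * ∫ z, z.2 * φ z ∂γ₂ := by
        rw [← integral_const_mul, ← integral_const_mul, ← integral_add]
        · congr 1 with z; ring
        · exact (int_fst.mul_bdd hφm (ae_of_all _ hφb)).const_mul _
        · exact (int_snd.mul_bdd hφm (ae_of_all _ hφb)).const_mul _
    _ = _ := by
        rw [stein_fst, stein_snd, integral_add (int_J'.const_mul a) (int_J2.const_mul b),
          integral_const_mul, integral_const_mul, integral_const_mul]
        ring

lemma hasDerivAt_integral_comp_gaussianReal_prod {u g g' b c b' c' : ℝ → ℝ} {t₀ Cu Cg Cg' : ℝ}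
    (hu : Measurable u) (hub : ∀ x, ‖u x‖ ≤ Cu) (hg : ∀ y, HasDerivAt g (g' y) y)
    (hgb : ∀ y, ‖g y‖ ≤ Cg) (hg'b : ∀ y, ‖g' y‖ ≤ Cg')
    (hb : ∀ᶠ t in 𝓝 t₀, HasDerivAt b (b' t) t) (hc : ∀ᶠ t in 𝓝 t₀, HasDerivAt c (c' t) t)
    (hb' : ContinuousAt b' t₀) (hc' : ContinuousAt c' t₀) :
    HasDerivAt (fun t => ∫ z, u z.1 * g (b t * z.1 + c t * z.2) ∂γ₂)
      (∫ z, u z.1 * g' (b t₀ * z.1 + c t₀ * z.2) * (b' t₀ * z.1 + c' t₀ * z.2) ∂γ₂) t₀ := by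
  have hgc : Continuous g := continuous_iff_continuousAt.2 fun y => (hg y).continuousAt
  have hg'm := measurable_of_forall_hasDerivAt hg
  set B := ‖b' t₀‖ + 1
  set C := ‖c' t₀‖ + 1
  have hs : ∀ᶠ t in 𝓝 t₀, (HasDerivAt b (b' t) t ∧ HasDerivAt c (c' t) t) ∧
      (‖b' t‖ ≤ B ∧ ‖c' t‖ ≤ C) :=
    (hb.and hc).and ((hb'.norm.eventually (Iio_mem_nhds (lt_add_one _))).and
      (hc'.norm.eventually (Iio_mem_nhds (lt_add_one _))) |>.mono fun _ h => ⟨h.1.le, h.2.le⟩)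
  have int_fst : Integrable (fun z : ℝ × ℝ => z.1) γ₂ :=
    ((memLp_id_gaussianReal 1).integrable le_rfl).comp_fst _
  have int_snd : Integrable (fun z : ℝ × ℝ => z.2) γ₂ :=
    ((memLp_id_gaussianReal 1).integrable le_rfl).comp_snd _
  refine (hasDerivAt_integral_of_dominated_loc_of_deriv_le
    (F := fun t z => u z.1 * g (b t * z.1 + c t * z.2))
    (F' := fun t z => u z.1 * g' (b t * z.1 + c t * z.2) * (b' t * z.1 + c' t * z.2))
    (bound := fun z : ℝ × ℝ => Cu * Cg' * (B * ‖z.1‖ + C * ‖z.2‖)) hs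
    (Eventually.of_forall fun t => Measurable.aestronglyMeasurable (by fun_prop))
    ((integrable_const (Cu * Cg)).mono' (Measurable.aestronglyMeasurable (by fun_prop))
      (ae_of_all _ fun z => norm_mul_le_of_le (hub _) (hgb _)))
    (Measurable.aestronglyMeasurable (by fun_prop))
    (ae_of_all _ fun z t ht => ?_)
    (((int_fst.norm.const_mul B).add (int_snd.norm.const_mul C)).const_mul _)
    (ae_of_all _ fun z t ht => ?_)).2
  · exact norm_mul_le_of_le (norm_mul_le_of_le (hub _) (hg'b _))
      (norm_add_le_of_le (norm_mul_le_of_le ht.2.1 le_rfl) (norm_mul_le_of_le ht.2.2 le_rfl))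
  · have := ((hg _).comp t ((ht.1.1.mul_const z.1).fun_add (ht.1.2.mul_const z.2))).const_mul
      (u z.1)
    exact this.congr_deriv (by ring)

lemma hasDerivAt_sqrt_sub_sq_div {p q t : ℝ} (h : t ^ 2 / p < q) :
    HasDerivAt (fun s => Real.sqrt (q - s ^ 2 / p)) (-(t / p) / Real.sqrt (q - t ^ 2 / p)) t := by
  refine ((((hasDerivAt_pow 2 t).div_const p).const_sub q).sqrt (sub_pos.2 h).ne').congr_deriv ?_
  field_simp
  ring

lemma Egauss2_mul_eq_integral_prod {f g : ℝ → ℝ} {Cf Cg : ℝ} (hf : Measurable f)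
    (hg : Measurable g) (hfb : ∀ x, ‖f x‖ ≤ Cf) (hgb : ∀ y, ‖g y‖ ≤ Cg) (t₁ t₂ t₃ : ℝ) :
    Egauss2 (fun x y => f x * g y) t₁ t₂ t₃ = ∫ z, f (Real.sqrt t₂ * z.1) *
      g (t₁ / Real.sqrt t₂ * z.1 + Real.sqrt (t₃ - t₁ ^ 2 / t₂) * z.2) ∂γ₂ :=
  (integral_prod (fun z : ℝ × ℝ => f (Real.sqrt t₂ * z.1) *
      g (t₁ / Real.sqrt t₂ * z.1 + Real.sqrt (t₃ - t₁ ^ 2 / t₂) * z.2))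
    ((integrable_const (Cf * Cg)).mono' (Measurable.aestronglyMeasurable (by fun_prop))
      (ae_of_all _ fun _ => norm_mul_le_of_le (hfb _) (hgb _)))).symm

lemma hasDerivAt_Egauss2_mul {f f' g g' g'' : ℝ → ℝ} {Cf Cf' Cg Cg' Cg'' : ℝ}
    (hf : ∀ x, HasDerivAt f (f' x) x) (hg : ∀ y, HasDerivAt g (g' y) y)
    (hg' : ∀ y, HasDerivAt g' (g'' y) y) (hfb : ∀ x, ‖f x‖ ≤ Cf) (hf'b : ∀ x, ‖f' x‖ ≤ Cf')
    (hgb : ∀ y, ‖g y‖ ≤ Cg) (hg'b : ∀ y, ‖g' y‖ ≤ Cg') (hg''b : ∀ y, ‖g'' y‖ ≤ Cg'')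
    {t₁ t₂ t₃ : ℝ} (h₂ : 0 < t₂) (hcov : t₁ ^ 2 / t₂ < t₃) :
    HasDerivAt (fun t => Egauss2 (fun x y => f x * g y) t t₂ t₃)
      (Egauss2 (fun x y => f' x * g' y) t₁ t₂ t₃) t₁ := by
  have hfc : Continuous f := continuous_iff_continuousAt.2 fun x => (hf x).continuousAt
  have hgc : Continuous g := continuous_iff_continuousAt.2 fun y => (hg y).continuousAt
  set c := fun t => Real.sqrt (t₃ - t ^ 2 / t₂)
  set c' := fun t => -(t / t₂) / c t
  have hc : ∀ᶠ t in 𝓝 t₁, HasDerivAt c (c' t) t :=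
    (ContinuousAt.eventually_lt (f := fun t => t ^ 2 / t₂) (by fun_prop) continuousAt_const
      hcov).mono fun t ht => hasDerivAt_sqrt_sub_sq_div ht
  have hc₁ : c t₁ ≠ 0 := (Real.sqrt_pos.2 (sub_pos.2 hcov)).ne'
  have hD := hasDerivAt_integral_comp_gaussianReal_prod (u := fun x => f (Real.sqrt t₂ * x))
    (b := fun t => t / Real.sqrt t₂) (b' := fun _ => 1 / Real.sqrt t₂) (c' := c')
    (hfc.comp (continuous_const_mul _)).measurable (fun x => hfb _) hg hgb hg'b
    (Eventually.of_forall fun t => (hasDerivAt_id' t).div_const _) hc continuousAt_const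
    (by fun_prop (disch := exact hc₁))
  rw [integral_comp_mul_linear_gaussianReal_prod hf hg' hfb hf'b hg'b hg''b] at hD
  have hcov_coeff : 1 / Real.sqrt t₂ * Real.sqrt t₂ = 1 :=
    one_div_mul_cancel (Real.sqrt_pos.2 h₂).ne'
  have hvar_coeff : 1 / Real.sqrt t₂ * (t₁ / Real.sqrt t₂) + c' t₁ * c t₁ = 0 := by
    simp only [c', div_mul_cancel₀ _ hc₁, div_mul_div_comm, Real.mul_self_sqrt h₂.le]
    ring
  rw [hcov_coeff, hvar_coeff, one_mul, zero_mul, add_zero] at hD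
  rw [Egauss2_mul_eq_integral_prod (measurable_of_forall_hasDerivAt hf)
    (measurable_of_forall_hasDerivAt hg) hf'b hg'b]
  convert hD using 2 with t
  exact Egauss2_mul_eq_integral_prod hfc.measurable hgc.measurable hfb hgb ..

theorem stmt9_general (f g : ℝ → ℝ) (hf : ContDiff ℝ 2 f) (hg : ContDiff ℝ 2 g)
    (hfb : ∀ k ≤ 2, ∃ C, ∀ x, |iteratedDeriv k f x| ≤ C)
    (hgb : ∀ k ≤ 2, ∃ C, ∀ x, |iteratedDeriv k g x| ≤ C)
    (t₁ t₂ t₃ : ℝ) (h₂ : 0 < t₂) (h₁ : |t₁| < Real.sqrt (t₂ * t₃)) :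
    HasDerivAt (fun t => Egauss2 (fun x y => f x * g y) t t₂ t₃)
      (Egauss2 (fun x y => deriv f x * deriv g y) t₁ t₂ t₃) t₁ := by
  obtain ⟨Cf, hCf⟩ := hfb 0 (by norm_num)
  obtain ⟨Cf', hCf'⟩ := hfb 1 (by norm_num)
  obtain ⟨Cg, hCg⟩ := hgb 0 (by norm_num)
  obtain ⟨Cg', hCg'⟩ := hgb 1 (by norm_num)
  obtain ⟨Cg'', hCg''⟩ := hgb 2 le_rfl
  rw [show 2 = 1 + 1 from rfl, iteratedDeriv_succ] at hCg''
  simp only [iteratedDeriv_zero, iteratedDeriv_one, ← Real.norm_eq_abs] at hCf hCf' hCg hCg' hCg''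
  have hf' : ∀ x, HasDerivAt f (deriv f x) x :=
    fun x => (hf.differentiable (by norm_num) x).hasDerivAt
  have hg' : ∀ y, HasDerivAt g (deriv g y) y :=
    fun y => (hg.differentiable (by norm_num) y).hasDerivAt
  have hg'' : ∀ y, HasDerivAt (deriv g) (deriv (deriv g) y) y := fun y => by
    simpa using (hg.differentiable_iteratedDeriv 1 (by norm_num) y).hasDerivAt
  have hcov : t₁ ^ 2 / t₂ < t₃ := by
    rw [div_lt_iff₀ h₂, mul_comm, ← sq_abs]
    exact (Real.lt_sqrt (abs_nonneg _)).1 h₁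
  exact hasDerivAt_Egauss2_mul hf' hg' hg'' hCf hCf' hCg hCg' hCg'' h₂ hcov

/-- Price's theorem: for `(X,Y)` centered bivariate Gaussian and `f, g` bounded `C²`
functions with bounded derivatives,
`∂/∂Cov(X,Y) E[f(X) g(Y)] = E[f'(X) g'(Y)]` (at fixed variances). -/
theorem stmt9 (f g : ℝ → ℝ) (hf : ContDiff ℝ 2 f) (hg : ContDiff ℝ 2 g)
    (hfb : ∀ k ≤ 2, ∃ C, ∀ x, |iteratedDeriv k f x| ≤ C)
    (hgb : ∀ k ≤ 2, ∃ C, ∀ x, |iteratedDeriv k g x| ≤ C)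
    (t₁ t₂ t₃ : ℝ) (h₂ : 0 < t₂) (h₃ : 0 < t₃) (h₁ : |t₁| < Real.sqrt (t₂ * t₃)) :
    HasDerivAt (fun t => Egauss2 (fun x y => f x * g y) t t₂ t₃)
      (Egauss2 (fun x y => deriv f x * deriv g y) t₁ t₂ t₃) t₁ :=
  stmt9_general f g hf hg hfb hgb t₁ t₂ t₃ h₂ h₁
end

section
/- Let g(z) = E[tanh'(z+Y) tanh'(z−Y)] where Y is a centered Gaussian with fixed variance σ² > 0 and tanh' = 1 − tanh². Then g is an even function of z, g is decreasing on [0,∞) and increasing on (−∞,0]. -/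
/-! Since `tanh' = sech²` and `cosh (z + y) cosh (z - y) = (cosh 2z + cosh 2y) / 2`, the integrand
defining `g` is `4 / (cosh 2z + cosh 2y)²`, which for every `y` is even in `z` and decreasing in
`|z|`; both properties pass to the integral. -/

open MeasureTheory ProbabilityTheory

/-- `g(z) = E[tanh'(z+Y) tanh'(z−Y)]` where `Y` is a centered Gaussian of variance `v`
and `tanh' = 1 − tanh²`. -/
noncomputable def gfun (v : NNReal) (z : ℝ) : ℝ :=
  ∫ y, (1 - Real.tanh (z + y) ^ 2) * (1 - Real.tanh (z - y) ^ 2) ∂(gaussianReal 0 v)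

open Real Set

lemma Function.Even.monotoneOn_Iic_of_antitoneOn_Ici {α β : Type*} [AddCommGroup α]
    [PartialOrder α] [IsOrderedAddMonoid α] [Preorder β] {f : α → β} (hf : f.Even)
    (h : AntitoneOn f (Ici 0)) : MonotoneOn f (Iic 0) := by
  intro a ha b hb hab
  rw [← hf a, ← hf b]
  exact h (neg_nonneg.2 hb) (neg_nonneg.2 ha) (neg_le_neg hab)

namespace Real

lemma one_sub_tanh_sq (x : ℝ) : 1 - tanh x ^ 2 = (cosh x ^ 2)⁻¹ := by
  rw [tanh_eq_sinh_div_cosh, div_pow, sinh_sq]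
  field_simp [(cosh_pos x).ne']
  ring

lemma cosh_add_mul_cosh_sub (x y : ℝ) :
    cosh (x + y) * cosh (x - y) = (cosh (2 * x) + cosh (2 * y)) / 2 := by
  rw [cosh_add, cosh_sub, cosh_two_mul, cosh_two_mul]
  nlinarith [cosh_sq x, cosh_sq y]

lemma one_sub_tanh_sq_mul_one_sub_tanh_sq (x y : ℝ) :
    (1 - tanh (x + y) ^ 2) * (1 - tanh (x - y) ^ 2) = 4 / (cosh (2 * x) + cosh (2 * y)) ^ 2 := by
  rw [one_sub_tanh_sq, one_sub_tanh_sq, ← mul_inv, ← mul_pow, cosh_add_mul_cosh_sub]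
  field_simp
  ring

end Real

lemma four_div_cosh_add_cosh_sq_le_one (x y : ℝ) : 4 / (cosh x + cosh y) ^ 2 ≤ 1 := by
  have hx := one_le_cosh x
  have hy := one_le_cosh y
  rw [div_le_one (by positivity)]
  nlinarith

lemma antitoneOn_four_div_cosh_two_mul_add_cosh_sq (y : ℝ) :
    AntitoneOn (fun x => 4 / (cosh (2 * x) + cosh y) ^ 2) (Ici 0) := by
  intro a (ha : 0 ≤ a) b (hb : 0 ≤ b) hab
  have hcosh : cosh (2 * a) ≤ cosh (2 * b) := by
    rw [cosh_le_cosh, abs_of_nonneg (by positivity), abs_of_nonneg (by positivity)]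
    linarith
  dsimp only
  gcongr

lemma antitoneOn_integral_four_div_cosh_add_cosh_sq (μ : Measure ℝ) [IsFiniteMeasure μ] :
    AntitoneOn (fun x => ∫ y, 4 / (cosh (2 * x) + cosh (2 * y)) ^ 2 ∂μ) (Ici 0) := by
  have hintegrable (x : ℝ) : Integrable (fun y => 4 / (cosh (2 * x) + cosh (2 * y)) ^ 2) μ := by
    have hcont : Continuous fun y => 4 / (cosh (2 * x) + cosh (2 * y)) ^ 2 :=
      continuous_const.div (by fun_prop) fun y => by positivity
    refine (integrable_const (1 : ℝ)).mono' hcont.aestronglyMeasurable ?_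
    refine .of_forall fun y => ?_
    rw [norm_of_nonneg (by positivity)]
    exact four_div_cosh_add_cosh_sq_le_one _ _
  intro a ha b hb hab
  exact integral_mono (hintegrable b) (hintegrable a)
    fun y => antitoneOn_four_div_cosh_two_mul_add_cosh_sq (2 * y) ha hb hab

theorem stmt14_general (v : NNReal) :
    (∀ z, gfun v (-z) = gfun v z) ∧
    AntitoneOn (gfun v) (Set.Ici 0) ∧
    MonotoneOn (gfun v) (Set.Iic 0) := by
  have hg : gfun v = fun z => ∫ y, 4 / (cosh (2 * z) + cosh (2 * y)) ^ 2 ∂(gaussianReal 0 v) := by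
    funext z
    simp only [gfun, one_sub_tanh_sq_mul_one_sub_tanh_sq]
  have heven : Function.Even (gfun v) := fun z => by simp [hg]
  have hanti : AntitoneOn (gfun v) (Ici 0) := hg ▸ antitoneOn_integral_four_div_cosh_add_cosh_sq _
  exact ⟨heven, hanti, heven.monotoneOn_Iic_of_antitoneOn_Ici hanti⟩

/-- `g` is even, decreasing on `[0,∞)` and increasing on `(−∞,0]`. -/
theorem stmt14 (v : NNReal) (hv : 0 < v) :
    (∀ z, gfun v (-z) = gfun v z) ∧
    AntitoneOn (gfun v) (Set.Ici 0) ∧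
    MonotoneOn (gfun v) (Set.Iic 0) :=
  stmt14_general v
end
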